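/- Suppose Ỹ_n ⊆ Ỹ_{n+1} for all n ∈ ℕ. Let (x̂_n), (v_n), (e_n), (r_n) be sequences with e_n ∈ Ω_n and x̂_{n+1} = A_cl x̂_n + B_cl v_n + B_w e_n for all n. Suppose (v_0, x̂_0) ∈ Õ_{∞,0}, and for each n ≥ 1 suppose v_n = v_{n−1} + κ_n(r_n − v_{n−1}) for some κ_n ∈ [0,1] with (v_n, x̂_n) ∈ Õ_{∞,n}. Then: (a) for every n ≥ 1 the feasible set {κ ∈ [0,1] : (v_{n−1} + κ(r_n − v_{n−1}), x̂_n) ∈ Õ_{∞,n}} contains κ = 0 (so such a choice of κ_n always exists); and (b) for every n ∈ ℕ, the closed-loop output satisfies C_cl x̂_n + D_cl v_n + D_w e_n ∈ Y_cl. -/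
import Mathlib


open Matrix Pointwise Filter

/-- Pontryagin difference of sets: `A ⊖ B = {z | z + v ∈ A for all v ∈ B}`. -/
def pDiff {d : ℕ} (A B : Set (Fin d → ℝ)) : Set (Fin d → ℝ) :=
  {z | ∀ v ∈ B, z + v ∈ A}

/-- `ℰˣ(n,k) = ⊕_{i=0}^{k-1} (A_cl^{k-1-i} B_w)·Ω_{n+i}` (Minkowski sum of linear
images), with the empty sum `ℰˣ(n,0) = {0}`. -/
def calEx {nx ne : ℕ} (Acl : Matrix (Fin nx) (Fin nx) ℝ)
    (Bw : Matrix (Fin nx) (Fin ne) ℝ) (Ω : ℕ → Set (Fin ne → ℝ)) (n k : ℕ) :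
    Set (Fin nx → ℝ) :=
  ∑ i ∈ Finset.range k, (Acl ^ (k - 1 - i) * Bw).mulVec '' Ω (n + i)

/-- `ℰʸ(n,k) = D_w·Ω_{n+k} ⊕ C_cl·ℰˣ(n,k)`. -/
def calEy {nx ne ny : ℕ} (Acl : Matrix (Fin nx) (Fin nx) ℝ)
    (Bw : Matrix (Fin nx) (Fin ne) ℝ) (Ccl : Matrix (Fin ny) (Fin nx) ℝ)
    (Dw : Matrix (Fin ny) (Fin ne) ℝ) (Ω : ℕ → Set (Fin ne → ℝ)) (n k : ℕ) :
    Set (Fin ny → ℝ) :=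
  Dw.mulVec '' Ω (n + k) + Ccl.mulVec '' calEx Acl Bw Ω n k

/-- `Y_{cl,n,k} = Y_cl ⊖ ℰʸ(n,k)`. -/
def Yclset {nx ne ny : ℕ} (Acl : Matrix (Fin nx) (Fin nx) ℝ)
    (Bw : Matrix (Fin nx) (Fin ne) ℝ) (Ccl : Matrix (Fin ny) (Fin nx) ℝ)
    (Dw : Matrix (Fin ny) (Fin ne) ℝ) (Ycl : Set (Fin ny → ℝ))
    (Ω : ℕ → Set (Fin ne → ℝ)) (n k : ℕ) : Set (Fin ny → ℝ) :=
  pDiff Ycl (calEy Acl Bw Ccl Dw Ω n k)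

/-- `H^y_k = D_cl + C_cl (I − A_cl)⁻¹ (I − A_cl^k) B_cl`. -/
noncomputable def Hy {nx nv ny : ℕ} (Acl : Matrix (Fin nx) (Fin nx) ℝ)
    (Bcl : Matrix (Fin nx) (Fin nv) ℝ) (Ccl : Matrix (Fin ny) (Fin nx) ℝ)
    (Dcl : Matrix (Fin ny) (Fin nv) ℝ) (k : ℕ) : Matrix (Fin ny) (Fin nv) ℝ :=
  Dcl + Ccl * (1 - Acl)⁻¹ * (1 - Acl ^ k) * Bcl

/-- `H^y_∞ = D_cl + C_cl (I − A_cl)⁻¹ B_cl`. -/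
noncomputable def Hyinf {nx nv ny : ℕ} (Acl : Matrix (Fin nx) (Fin nx) ℝ)
    (Bcl : Matrix (Fin nx) (Fin nv) ℝ) (Ccl : Matrix (Fin ny) (Fin nx) ℝ)
    (Dcl : Matrix (Fin ny) (Fin nv) ℝ) : Matrix (Fin ny) (Fin nv) ℝ :=
  Dcl + Ccl * (1 - Acl)⁻¹ * Bcl

/-- `Õ_{∞,n} = {(v, x̂) : H^y_∞ v ∈ Ỹ_n and H^y_k v + C_cl A_cl^k x̂ ∈ Y_{cl,n,k} ∀k}`. -/
def Otilde {nx nv ne ny : ℕ} (Acl : Matrix (Fin nx) (Fin nx) ℝ)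
    (Bcl : Matrix (Fin nx) (Fin nv) ℝ) (Bw : Matrix (Fin nx) (Fin ne) ℝ)
    (Ccl : Matrix (Fin ny) (Fin nx) ℝ) (Dcl : Matrix (Fin ny) (Fin nv) ℝ)
    (Dw : Matrix (Fin ny) (Fin ne) ℝ) (Ycl : Set (Fin ny → ℝ))
    (Ω : ℕ → Set (Fin ne → ℝ)) (Ytil : ℕ → Set (Fin ny → ℝ)) (n : ℕ) :
    Set ((Fin nv → ℝ) × (Fin nx → ℝ)) :=
  {p | (Hyinf Acl Bcl Ccl Dcl).mulVec p.1 ∈ Ytil n ∧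
       ∀ k : ℕ, (Hy Acl Bcl Ccl Dcl k).mulVec p.1 + (Ccl * Acl ^ k).mulVec p.2 ∈
         Yclset Acl Bw Ccl Dw Ycl Ω n k}


section Aux

variable {nx nv ne ny : ℕ} {Acl : Matrix (Fin nx) (Fin nx) ℝ}
    {Bcl : Matrix (Fin nx) (Fin nv) ℝ} {Bw : Matrix (Fin nx) (Fin ne) ℝ}
    {Ccl : Matrix (Fin ny) (Fin nx) ℝ} {Dcl : Matrix (Fin ny) (Fin nv) ℝ}
    {Dw : Matrix (Fin ny) (Fin ne) ℝ} {Ycl : Set (Fin ny → ℝ)}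
    {Ω : ℕ → Set (Fin ne → ℝ)} {Ytil : ℕ → Set (Fin ny → ℝ)}

lemma calEx_step {m k : ℕ} {s : Fin nx → ℝ} {w : Fin ne → ℝ}
    (hs : s ∈ calEx Acl Bw Ω (m + 1) k) (hw : w ∈ Ω m) :
    s + (Acl ^ k * Bw).mulVec w ∈ calEx Acl Bw Ω m (k + 1) := by
  unfold calEx at *
  rw [Finset.sum_range_succ']
  have heq : (∑ i ∈ Finset.range k,
      (Acl ^ (k + 1 - 1 - (i + 1)) * Bw).mulVec '' Ω (m + (i + 1))) =
      ∑ i ∈ Finset.range k, (Acl ^ (k - 1 - i) * Bw).mulVec '' Ω (m + 1 + i) := by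
    apply Finset.sum_congr rfl
    intro i _
    have h1 : k + 1 - 1 - (i + 1) = k - 1 - i := by omega
    have h2 : m + (i + 1) = m + 1 + i := by omega
    rw [h1, h2]
  rw [heq]
  exact Set.add_mem_add hs ⟨w, hw, rfl⟩

lemma Hy_succ (hInv : IsUnit (1 - Acl)) (k : ℕ) :
    Hy Acl Bcl Ccl Dcl (k + 1) = Hy Acl Bcl Ccl Dcl k + Ccl * Acl ^ k * Bcl := by
  have hdet := (Matrix.isUnit_iff_isUnit_det _).mp hInv
  have hmul : (1 - Acl)⁻¹ * (1 - Acl) = 1 := Matrix.nonsing_inv_mul _ hdet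
  unfold Hy
  have : (1 - Acl)⁻¹ * (1 - Acl ^ (k + 1)) =
      (1 - Acl)⁻¹ * (1 - Acl ^ k) + Acl ^ k := by
    have h1 : (1 - Acl ^ (k + 1)) = (1 - Acl ^ k) + (1 - Acl) * Acl ^ k := by
      rw [pow_succ']; noncomm_ring
    rw [h1, mul_add, ← mul_assoc, hmul, one_mul]
  have key : Ccl * (1 - Acl)⁻¹ * (1 - Acl ^ (k + 1)) =
      Ccl * (1 - Acl)⁻¹ * (1 - Acl ^ k) + Ccl * Acl ^ k := by
    rw [Matrix.mul_assoc Ccl, this, Matrix.mul_add, ← Matrix.mul_assoc Ccl]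
  rw [key, Matrix.add_mul, ← add_assoc]

lemma Otilde_invariant {m : ℕ} {p : Fin nv → ℝ} {x : Fin nx → ℝ} {w : Fin ne → ℝ}
    (hInv : IsUnit (1 - Acl)) (hYtil : ∀ n : ℕ, Ytil n ⊆ Ytil (n + 1))
    (hmem : (p, x) ∈ Otilde Acl Bcl Bw Ccl Dcl Dw Ycl Ω Ytil m) (hw : w ∈ Ω m) :
    (p, Acl.mulVec x + Bcl.mulVec p + Bw.mulVec w) ∈
      Otilde Acl Bcl Bw Ccl Dcl Dw Ycl Ω Ytil (m + 1) := by
  obtain ⟨h1, h2⟩ := hmem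
  refine ⟨hYtil m h1, fun k => ?_⟩
  have hz := h2 (k + 1)
  -- rewrite the LHS
  have hlhs : (Hy Acl Bcl Ccl Dcl k).mulVec p +
      (Ccl * Acl ^ k).mulVec (Acl.mulVec x + Bcl.mulVec p + Bw.mulVec w) =
      ((Hy Acl Bcl Ccl Dcl (k + 1)).mulVec p + (Ccl * Acl ^ (k + 1)).mulVec x) +
        (Ccl * (Acl ^ k * Bw)).mulVec w := by
    rw [Hy_succ hInv k, Matrix.add_mulVec, Matrix.mulVec_add, Matrix.mulVec_add,
      Matrix.mulVec_mulVec, Matrix.mulVec_mulVec, Matrix.mulVec_mulVec]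
    have e1 : Ccl * Acl ^ k * Acl = Ccl * Acl ^ (k + 1) := by
      rw [Matrix.mul_assoc, ← pow_succ]
    have e2 : Ccl * Acl ^ k * Bw = Ccl * (Acl ^ k * Bw) := Matrix.mul_assoc _ _ _
    have e3 : Ccl * Acl ^ k * Bcl = Ccl * Acl ^ k * Bcl := rfl
    rw [e1, e2]
    abel
  rw [hlhs]
  intro u hu
  obtain ⟨a, ⟨ω, hω, rfl⟩, b, ⟨s, hs, rfl⟩, rfl⟩ := hu
  have hω' : ω ∈ Ω (m + (k + 1)) := by
    have : m + 1 + k = m + (k + 1) := by omega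
    rwa [this] at hω
  have hs' : s + (Acl ^ k * Bw).mulVec w ∈ calEx Acl Bw Ω m (k + 1) :=
    calEx_step hs hw
  have key := hz (Dw.mulVec ω + Ccl.mulVec (s + (Acl ^ k * Bw).mulVec w))
    (Set.add_mem_add ⟨ω, hω', rfl⟩ ⟨_, hs', rfl⟩)
  have : (Hy Acl Bcl Ccl Dcl (k + 1)).mulVec p + (Ccl * Acl ^ (k + 1)).mulVec x +
      (Ccl * (Acl ^ k * Bw)).mulVec w + (Dw.mulVec ω + Ccl.mulVec s) =
      (Hy Acl Bcl Ccl Dcl (k + 1)).mulVec p + (Ccl * Acl ^ (k + 1)).mulVec x +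
      (Dw.mulVec ω + Ccl.mulVec (s + (Acl ^ k * Bw).mulVec w)) := by
    simp only [Matrix.mulVec_add, Matrix.mulVec_mulVec]
    abel
  rw [this]
  exact key

lemma output_mem {m : ℕ} {p : Fin nv → ℝ} {x : Fin nx → ℝ} {w : Fin ne → ℝ}
    (hmem : (p, x) ∈ Otilde Acl Bcl Bw Ccl Dcl Dw Ycl Ω Ytil m) (hw : w ∈ Ω m) :
    Ccl.mulVec x + Dcl.mulVec p + Dw.mulVec w ∈ Ycl := by
  obtain ⟨-, h2⟩ := hmem
  have hz := h2 0
  have hHy0 : Hy Acl Bcl Ccl Dcl 0 = Dcl := by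
    unfold Hy; simp
  have hC0 : Ccl * Acl ^ 0 = Ccl := by simp
  rw [hHy0, hC0] at hz
  have hmemE : Dw.mulVec w ∈ calEy Acl Bw Ccl Dw Ω m 0 := by
    unfold calEy calEx
    have : Dw.mulVec w = Dw.mulVec w + Ccl.mulVec 0 := by
      rw [Matrix.mulVec_zero, add_zero]
    rw [this]
    refine Set.add_mem_add ⟨w, ?_, rfl⟩ ⟨0, ?_, rfl⟩
    · simpa using hw
    · simp
  have := hz _ hmemE
  have heq : Dcl.mulVec p + Ccl.mulVec x + Dw.mulVec w =
      Ccl.mulVec x + Dcl.mulVec p + Dw.mulVec w := by abel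
  rwa [heq] at this

end Aux

/-- Reference-governor scheme: suppose `Ỹ_n ⊆ Ỹ_{n+1}` for all `n`,
`e_n ∈ Ω_n`, `x̂_{n+1} = A_cl x̂_n + B_cl v_n + B_w e_n`, `(v_0, x̂_0) ∈ Õ_{∞,0}`, and
for each `n ≥ 1`, `v_n = v_{n−1} + κ_n(r_n − v_{n−1})` for some `κ_n ∈ [0,1]` with
`(v_n, x̂_n) ∈ Õ_{∞,n}`. Then (a) for every `n ≥ 1` the feasible set of step sizes
contains `κ = 0`, and (b) for every `n`, `C_cl x̂_n + D_cl v_n + D_w e_n ∈ Y_cl`. -/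


theorem stmt_15 {nx nv ne ny : ℕ} (Acl : Matrix (Fin nx) (Fin nx) ℝ)
    (Bcl : Matrix (Fin nx) (Fin nv) ℝ) (Bw : Matrix (Fin nx) (Fin ne) ℝ)
    (Ccl : Matrix (Fin ny) (Fin nx) ℝ) (Dcl : Matrix (Fin ny) (Fin nv) ℝ)
    (Dw : Matrix (Fin ny) (Fin ne) ℝ) (Ycl : Set (Fin ny → ℝ))
    (Ω : ℕ → Set (Fin ne → ℝ)) (Ytil : ℕ → Set (Fin ny → ℝ))
    (hInv : IsUnit (1 - Acl))
    (hYtil : ∀ n : ℕ, Ytil n ⊆ Ytil (n + 1))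
    (xhat : ℕ → Fin nx → ℝ) (v r : ℕ → Fin nv → ℝ) (e : ℕ → Fin ne → ℝ)
    (he : ∀ n : ℕ, e n ∈ Ω n)
    (hdyn : ∀ n : ℕ,
      xhat (n + 1) = Acl.mulVec (xhat n) + Bcl.mulVec (v n) + Bw.mulVec (e n))
    (h0 : (v 0, xhat 0) ∈ Otilde Acl Bcl Bw Ccl Dcl Dw Ycl Ω Ytil 0)
    (hstep : ∀ n : ℕ, 1 ≤ n → ∃ κ ∈ Set.Icc (0 : ℝ) 1,
      v n = v (n - 1) + κ • (r n - v (n - 1)) ∧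
      (v n, xhat n) ∈ Otilde Acl Bcl Bw Ccl Dcl Dw Ycl Ω Ytil n) :
    (∀ n : ℕ, 1 ≤ n →
      (0 : ℝ) ∈ {κ ∈ Set.Icc (0 : ℝ) 1 |
        (v (n - 1) + κ • (r n - v (n - 1)), xhat n) ∈
          Otilde Acl Bcl Bw Ccl Dcl Dw Ycl Ω Ytil n}) ∧
    (∀ n : ℕ, Ccl.mulVec (xhat n) + Dcl.mulVec (v n) + Dw.mulVec (e n) ∈ Ycl) := by
  have hmem : ∀ n : ℕ, (v n, xhat n) ∈ Otilde Acl Bcl Bw Ccl Dcl Dw Ycl Ω Ytil n := by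
    intro n
    cases n with
    | zero => exact h0
    | succ m =>
      obtain ⟨κ, -, -, h⟩ := hstep (m + 1) (by omega)
      exact h
  constructor
  · intro n hn
    obtain ⟨m, rfl⟩ : ∃ m, n = m + 1 := ⟨n - 1, by omega⟩
    refine ⟨⟨le_refl 0, zero_le_one⟩, ?_⟩
    have hsimp : v (m + 1 - 1) + (0 : ℝ) • (r (m + 1) - v (m + 1 - 1)) = v m := by
      simp
    rw [hsimp]
    have := Otilde_invariant hInv hYtil (hmem m) (he m)
    rwa [← hdyn m] at this
  · intro n
    exact output_mem (hmem n) (he n)
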